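/- arXiv:2209.10133 — 4 statements merged into one kernel-verified Lean document; each statement's English description precedes it below -/
import Mathlib

section
/- For p ∈ [0,1], let ρ_M = ((1+2p)/3)|ψ⁻⟩⟨ψ⁻| + ((1−p)/3)|00⟩⟨00| + ((1−p)/3)|ψ⁺⟩⟨ψ⁺| be the rank-3 maximally entangled mixed state, where |ψ^±⟩ = (|01⟩ ± |10⟩)/√2. Then Σ_{i,j=1}^{3} (Re Tr(ρ_M (σ_i ⊗ σ_j)))² = (1 + 4p + 22p²)/9, i.e., the steering observable of ρ_M equals √((1+4p+22p²)/9). -/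
open Matrix ComplexOrder

/-- The three Pauli matrices σ₁, σ₂, σ₃. -/
noncomputable def pauli : Fin 3 → Matrix (Fin 2) (Fin 2) ℂ
  | 0 => !![0, 1; 1, 0]
  | 1 => !![0, -Complex.I; Complex.I, 0]
  | 2 => !![1, 0; 0, -1]

/-- Kronecker product of two 2×2 matrices, as a 4×4 matrix
(two-qubit basis ordering |00⟩, |01⟩, |10⟩, |11⟩). -/
noncomputable def kron (A B : Matrix (Fin 2) (Fin 2) ℂ) : Matrix (Fin 4) (Fin 4) ℂ :=
  Matrix.of fun i j =>
    A ⟨i.val / 2, by have := i.isLt; omega⟩ ⟨j.val / 2, by have := j.isLt; omega⟩ *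
    B ⟨i.val % 2, by have := i.isLt; omega⟩ ⟨j.val % 2, by have := j.isLt; omega⟩

/-- The rank-one projector |v⟩⟨v| onto a two-qubit vector v. -/
noncomputable def outer (v : Fin 4 → ℂ) : Matrix (Fin 4) (Fin 4) ℂ :=
  Matrix.of fun i j => v i * star (v j)

/-- The Bell state |ψ⁻⟩ = (|01⟩ - |10⟩)/√2. -/
noncomputable def psiMinus : Fin 4 → ℂ := fun i => ![0, 1, -1, 0] i / (Real.sqrt 2 : ℂ)

/-- The Bell state |ψ⁺⟩ = (|01⟩ + |10⟩)/√2. -/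
noncomputable def psiPlus : Fin 4 → ℂ := fun i => ![0, 1, 1, 0] i / (Real.sqrt 2 : ℂ)

/-- The computational basis state |00⟩. -/
noncomputable def ket00 : Fin 4 → ℂ := ![1, 0, 0, 0]

/-!
The correlation matrix `r_ij(ρ) = Re Tr(ρ (σᵢ ⊗ σⱼ))` is real-linear in `ρ`, so it is determined
by its values on the three pure components of `ρ_M`: it is `-1` on the singlet `ψ⁻`,
`diag(1, 1, -1)` on `ψ⁺` and `diag(0, 0, 1)` on `|00⟩`. Hence `r(ρ_M) = diag(-p, -p, -(1+2p)/3)`,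
and the sum of its squared entries is `2p² + (1+2p)²/9 = (1+4p+22p²)/9`.
-/
noncomputable def correlation (ρ : Matrix (Fin 4) (Fin 4) ℂ) : Matrix (Fin 3) (Fin 3) ℝ :=
  Matrix.of fun i j => ((ρ * kron (pauli i) (pauli j)).trace).re

lemma correlation_add (A B : Matrix (Fin 4) (Fin 4) ℂ) :
    correlation (A + B) = correlation A + correlation B := by
  ext i j
  simp [correlation, add_mul, trace_add]

lemma correlation_ofReal_smul (c : ℝ) (A : Matrix (Fin 4) (Fin 4) ℂ) :
    correlation ((c : ℂ) • A) = c • correlation A := by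
  ext i j
  simp [correlation, trace_smul]

lemma ofReal_sqrt_two_mul_self : (Real.sqrt 2 : ℂ) * Real.sqrt 2 = 2 := by
  rw [← Complex.ofReal_mul, Real.mul_self_sqrt zero_le_two, Complex.ofReal_ofNat]

lemma outer_psiMinus :
    outer psiMinus = !![0, 0, 0, 0; 0, 1/2, -1/2, 0; 0, -1/2, 1/2, 0; 0, 0, 0, 0] := by
  ext i j
  fin_cases i <;> fin_cases j <;>
    simp [outer, psiMinus, div_mul_div_comm, ofReal_sqrt_two_mul_self]

lemma outer_psiPlus :
    outer psiPlus = !![0, 0, 0, 0; 0, 1/2, 1/2, 0; 0, 1/2, 1/2, 0; 0, 0, 0, 0] := by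
  ext i j
  fin_cases i <;> fin_cases j <;>
    simp [outer, psiPlus, div_mul_div_comm, ofReal_sqrt_two_mul_self]

lemma outer_ket00 : outer ket00 = !![1, 0, 0, 0; 0, 0, 0, 0; 0, 0, 0, 0; 0, 0, 0, 0] := by
  ext i j
  fin_cases i <;> fin_cases j <;> simp [outer, ket00]

lemma kron_eta (A B : Matrix (Fin 2) (Fin 2) ℂ) : kron A B =
    !![A 0 0 * B 0 0, A 0 0 * B 0 1, A 0 1 * B 0 0, A 0 1 * B 0 1;
       A 0 0 * B 1 0, A 0 0 * B 1 1, A 0 1 * B 1 0, A 0 1 * B 1 1;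
       A 1 0 * B 0 0, A 1 0 * B 0 1, A 1 1 * B 0 0, A 1 1 * B 0 1;
       A 1 0 * B 1 0, A 1 0 * B 1 1, A 1 1 * B 1 0, A 1 1 * B 1 1] := by
  ext i j
  fin_cases i <;> fin_cases j <;> rfl

lemma correlation_psiMinus : correlation (outer psiMinus) = diagonal ![-1, -1, -1] := by
  ext i j
  fin_cases i <;> fin_cases j <;>
    simp [correlation, outer_psiMinus, kron_eta, pauli, trace, Fin.sum_univ_four]
  all_goals norm_num

lemma correlation_psiPlus : correlation (outer psiPlus) = diagonal ![1, 1, -1] := by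
  ext i j
  fin_cases i <;> fin_cases j <;>
    simp [correlation, outer_psiPlus, kron_eta, pauli, trace, Fin.sum_univ_four]
  all_goals norm_num

lemma correlation_ket00 : correlation (outer ket00) = diagonal ![0, 0, 1] := by
  ext i j
  fin_cases i <;> fin_cases j <;>
    simp [correlation, outer_ket00, kron_eta, pauli, trace, Fin.sum_univ_four]

lemma sum_sum_diagonal_sq {n R : Type*} [Fintype n] [DecidableEq n] [Semiring R] (d : n → R) :
    ∑ i, ∑ j, diagonal d i j ^ 2 = ∑ i, d i ^ 2 := by
  simp [diagonal_apply, ite_pow]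

theorem stmt2_general (p : ℝ)
    (ρM : Matrix (Fin 4) (Fin 4) ℂ)
    (hρM : ρM = (((1 + 2 * p) / 3 : ℝ) : ℂ) • outer psiMinus +
        (((1 - p) / 3 : ℝ) : ℂ) • outer ket00 +
        (((1 - p) / 3 : ℝ) : ℂ) • outer psiPlus) :
    ∑ i, ∑ j, ((ρM * kron (pauli i) (pauli j)).trace).re ^ 2
      = (1 + 4 * p + 22 * p ^ 2) / 9 := by
  have hT : correlation ρM = diagonal ![-p, -p, -((1 + 2 * p) / 3)] := by
    rw [hρM, correlation_add, correlation_add, correlation_ofReal_smul, correlation_ofReal_smul,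
      correlation_ofReal_smul, correlation_psiMinus, correlation_ket00, correlation_psiPlus,
      ← diagonal_smul, ← diagonal_smul, ← diagonal_smul, diagonal_add, diagonal_add]
    congr 1
    ext k
    fin_cases k <;> simp <;> ring
  calc ∑ i, ∑ j, ((ρM * kron (pauli i) (pauli j)).trace).re ^ 2
      = ∑ i, ∑ j, correlation ρM i j ^ 2 := rfl
    _ = (1 + 4 * p + 22 * p ^ 2) / 9 := by
      rw [hT, sum_sum_diagonal_sq]
      simp [Fin.sum_univ_three]
      ring

/-- For the rank-3 MEMS state
`ρ_M = ((1+2p)/3)|ψ⁻⟩⟨ψ⁻| + ((1−p)/3)|00⟩⟨00| + ((1−p)/3)|ψ⁺⟩⟨ψ⁺|` with p ∈ [0,1],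
the squared steering observable `Σ_{i,j} (Re Tr(ρ_M (σᵢ ⊗ σⱼ)))²` equals
`(1 + 4p + 22p²)/9`. -/
theorem stmt2 (p : ℝ) (hp : p ∈ Set.Icc (0 : ℝ) 1)
    (ρM : Matrix (Fin 4) (Fin 4) ℂ)
    (hρM : ρM = (((1 + 2 * p) / 3 : ℝ) : ℂ) • outer psiMinus +
        (((1 - p) / 3 : ℝ) : ℂ) • outer ket00 +
        (((1 - p) / 3 : ℝ) : ℂ) • outer psiPlus) :
    ∑ i, ∑ j, ((ρM * kron (pauli i) (pauli j)).trace).re ^ 2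
      = (1 + 4 * p + 22 * p ^ 2) / 9 :=
  stmt2_general p ρM hρM
end

section
/- For every p ∈ [0,1), the strict inequality (1/2)(1 + √((1 + 4p + 22p²)/27)) < (2 + p)/3 holds. (Thus, for the rank-3 MEMS state with steering observable S = √((1+4p+22p²)/9) and concurrence C = p, the upper bound (1/2)(1 + S/√3) on the average teleportation fidelity based on the steering observable is strictly smaller than the bound (2 + C)/3 based on concurrence.) -/
/-! The square of `(1 + 2p)/3` exceeds the radicand `(1 + 4p + 22p²)/27` by
`2(1 - p)(1 + 5p)/27`, which is positive on `(-1/5, 1)`. Hence `√((1 + 4p + 22p²)/27) < (1 + 2p)/3`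
there, and halving `1 + (1 + 2p)/3` gives exactly `(2 + p)/3`. -/

theorem sqrt_steering_radicand_lt {p : ℝ} (hp₀ : -1 / 5 < p) (hp₁ : p < 1) :
    Real.sqrt ((1 + 4 * p + 22 * p ^ 2) / 27) < (1 + 2 * p) / 3 := by
  rw [Real.sqrt_lt' (by linarith)]
  nlinarith [mul_pos (sub_pos.2 hp₁) (by linarith : (0 : ℝ) < 1 + 5 * p)]

/-- For every p ∈ [0,1), the steering-based upper bound `(1/2)(1 + S/√3)` on the
average teleportation fidelity of the rank-3 MEMS state, with
`S = √((1+4p+22p²)/9)` (so `S/√3 = √((1+4p+22p²)/27)`), is strictly smaller than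
the concurrence-based bound `(2 + C)/3` with `C = p`. -/
theorem stmt4 (p : ℝ) (hp : p ∈ Set.Ico (0 : ℝ) 1) :
    (1 / 2 : ℝ) * (1 + Real.sqrt ((1 + 4 * p + 22 * p ^ 2) / 27)) < (2 + p) / 3 := by
  have := sqrt_steering_radicand_lt (by linarith [hp.1]) hp.2
  linarith
end

section
/- For every p ∈ [0,1), the strict inequality (1/2)(1 + √((1 + 2p + 3p²)/6)) < (5 + p)/6 holds. (Thus, for the rank-2 MEMS state with steering observable S = √((1+2p+3p²)/2) and concurrence C = (1+p)/2, the upper bound (1/2)(1 + S/√3) on the average teleportation fidelity based on the steering observable is strictly smaller than the bound (2 + C)/3 based on concurrence.) -/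
/- Squaring, `((2 + p) / 3) ^ 2 - (1 + 2p + 3p²) / 6 = (1 - p)(5 + 7p) / 18`, which is positive
exactly for `-5/7 < p < 1`. -/
theorem sqrt_steering_lt_of_mem_Ioo {p : ℝ} (hp : p ∈ Set.Ioo (-5 / 7 : ℝ) 1) :
    Real.sqrt ((1 + 2 * p + 3 * p ^ 2) / 6) < (2 + p) / 3 := by
  obtain ⟨hlo, hhi⟩ := hp
  rw [Real.sqrt_lt' (by linarith)]
  nlinarith [mul_pos (sub_pos.mpr hhi) (by linarith : (0 : ℝ) < 5 + 7 * p)]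

/-- For every p ∈ [0,1), the steering-based upper bound `(1/2)(1 + S/√3)` on the
average teleportation fidelity of the rank-2 MEMS state, with
`S = √((1+2p+3p²)/2)` (so `S/√3 = √((1+2p+3p²)/6)`), is strictly smaller than the
concurrence-based bound `(2 + C)/3` with `C = (1+p)/2`, i.e., `(5+p)/6`. -/
theorem stmt7 (p : ℝ) (hp : p ∈ Set.Ico (0 : ℝ) 1) :
    (1 / 2 : ℝ) * (1 + Real.sqrt ((1 + 2 * p + 3 * p ^ 2) / 6)) < (5 + p) / 6 := by
  have h := sqrt_steering_lt_of_mem_Ioo ⟨by linarith [hp.1], hp.2⟩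
  linarith
end

section
/- Let a, b, c, d be nonnegative reals with a + b + c + d = 1 and let w, z be complex numbers with |w|² ≤ ad and |z|² ≤ bc (the constraints of a two-qubit X-type density matrix ρ_X). If 4(|w|² + |z|²) + (a + d − b − c)² > 1 (i.e., the steering observable S(ρ_X) > 1), then χ₀ = (a + d + 2|w|)/2 > 1/2 or χ₁ = (b + c + 2|z|)/2 > 1/2; consequently the fully entangled fraction F(ρ_X) = max{χ₀, χ₁, χ₂, χ₃} exceeds 1/2 and the restricted average teleportation fidelity f(ρ_X) = (2F(ρ_X) + 1)/3 exceeds 2/3. In other words, X-type states violating the three-setting linear steering inequality are useful for teleportation even when the receiver can only apply identity or Pauli rotation operations. -/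
/-! Put `p = a + d` and `q = b + c`, so `p + q = 1`. By AM-GM, `2|w| ≤ p` and `2|z| ≤ q`.
If neither `χ₀` nor `χ₁` exceeded `1/2`, then also `2|w| ≤ q` and `2|z| ≤ p`, hence
`4|w|² ≤ pq` and `4|z|² ≤ pq`, and the squared steering observable would be at most
`2pq + (p - q)² = (p + q)² - 2pq ≤ 1`. -/

lemma sq_le_mul_of_le_of_le {R : Type*} [Semiring R] [PartialOrder R] [IsOrderedRing R]
    {x p q : R} (hx : 0 ≤ x) (hp : x ≤ p) (hq : x ≤ q) :
    x ^ 2 ≤ p * q := by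
  rw [sq]
  exact mul_le_mul hp hq hx (hx.trans hp)

lemma one_lt_add_two_mul_or_of_one_lt {p q W Z : ℝ} (hpq : p + q = 1) (hW : 0 ≤ W) (hZ : 0 ≤ Z)
    (hWp : 2 * W ≤ p) (hZq : 2 * Z ≤ q) (hS : 1 < 4 * (W ^ 2 + Z ^ 2) + (p - q) ^ 2) :
    1 < p + 2 * W ∨ 1 < q + 2 * Z := by
  by_contra! h
  have hW2 : (2 * W) ^ 2 ≤ p * q := sq_le_mul_of_le_of_le (by positivity) hWp (by linarith [h.1])
  have hZ2 : (2 * Z) ^ 2 ≤ p * q := sq_le_mul_of_le_of_le (by positivity) (by linarith [h.2]) hZq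
  have hpq_nonneg : 0 ≤ p * q := mul_nonneg (by linarith) (by linarith)
  have : 4 * (W ^ 2 + Z ^ 2) + (p - q) ^ 2 ≤ 1 :=
    calc 4 * (W ^ 2 + Z ^ 2) + (p - q) ^ 2 = (2 * W) ^ 2 + (2 * Z) ^ 2 + (p - q) ^ 2 := by ring
      _ ≤ 2 * (p * q) + (p - q) ^ 2 := by linarith
      _ = (p + q) ^ 2 - 2 * (p * q) := by ring
      _ ≤ 1 := by rw [hpq]; linarith
  linarith

/-- For an X-type two-qubit state with diagonal entries a, b, c, d ≥ 0,
a + b + c + d = 1, and anti-diagonal entries w, z ∈ ℂ with |w|² ≤ ad, |z|² ≤ bc: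
if the steering observable exceeds 1, i.e. `4(|w|² + |z|²) + (a+d−b−c)² > 1`
(violation of the three-setting linear steering inequality), then
`χ₀ = (a+d+2|w|)/2 > 1/2` or `χ₁ = (b+c+2|z|)/2 > 1/2`; consequently the fully
entangled fraction `F = max{χ₀, χ₁, χ₂, χ₃}` exceeds 1/2 and the restricted
average teleportation fidelity `f = (2F+1)/3` exceeds 2/3. -/
theorem stmt8 (a b c d : ℝ) (ha : 0 ≤ a) (hb : 0 ≤ b) (hc : 0 ≤ c) (hd : 0 ≤ d)
    (hsum : a + b + c + d = 1) (w z : ℂ)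
    (hw : ‖w‖ ^ 2 ≤ a * d) (hz : ‖z‖ ^ 2 ≤ b * c)
    (hS : 4 * (‖w‖ ^ 2 + ‖z‖ ^ 2) + (a + d - b - c) ^ 2 > 1) :
    ((a + d + 2 * ‖w‖) / 2 > 1 / 2 ∨ (b + c + 2 * ‖z‖) / 2 > 1 / 2) ∧
    max (max ((a + d + 2 * ‖w‖) / 2) ((b + c + 2 * ‖z‖) / 2))
        (max ((a + d - 2 * ‖w‖) / 2) ((b + c - 2 * ‖z‖) / 2)) > 1 / 2 ∧
    (2 * max (max ((a + d + 2 * ‖w‖) / 2) ((b + c + 2 * ‖z‖) / 2))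
        (max ((a + d - 2 * ‖w‖) / 2) ((b + c - 2 * ‖z‖) / 2)) + 1) / 3
      > 2 / 3 := by
  have hχ : (a + d + 2 * ‖w‖) / 2 > 1 / 2 ∨ (b + c + 2 * ‖z‖) / 2 > 1 / 2 := by
    have := one_lt_add_two_mul_or_of_one_lt (p := a + d) (q := b + c) (by linarith)
      (norm_nonneg w) (norm_nonneg z) (two_mul_le_add_of_sq_le_mul ha hd hw)
      (two_mul_le_add_of_sq_le_mul hb hc hz) (by linarith)
    exact this.imp (fun h ↦ by linarith) (fun h ↦ by linarith)
  have hF : max (max ((a + d + 2 * ‖w‖) / 2) ((b + c + 2 * ‖z‖) / 2))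
      (max ((a + d - 2 * ‖w‖) / 2) ((b + c - 2 * ‖z‖) / 2)) > 1 / 2 :=
    lt_max_iff.2 (Or.inl (lt_max_iff.2 hχ))
  exact ⟨hχ, hF, by linarith⟩
end
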